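/- Let U_1, ..., U_n be n ≥ 2 distributions and let α ≥ 0. For p = (p_1,...,p_n) in the open simplex Δ = {p ∈ (0,1)^n : Σ p_i = 1}, write U_p = Σ_{i=1}^n p_i U_i. The following are equivalent: (a) U_p ∈ R*_{-α} for every p ∈ Δ; (b) U_p ∈ R*_{-α} for some p ∈ Δ and, for every y > 0 and every i = 1,...,n, Ū_i(x/y) − y^α Ū_i(x) = o(Σ_{j=1}^n Ū_j(x)) as x → ∞. -/

import Mathlib

/-!
Tails of mixtures with positive weights are all comparable with `Σⱼ Ūⱼ`, and `Ū_p` is linear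
in `p`.

(a) ⇒ (b): a member of `R*_{-α}` is regularly varying, so `Ū_p(x/y) - y^α Ū_p(x) = o(Ū_p(x))`.
Since `Ūᵢ = 2 Ū_q - Ū_p` for the midpoint `q` of `p` and the `i`-th vertex of the simplex, the
relation passes to `Ūᵢ` with error `o(Σⱼ Ūⱼ)`.

(b) ⇒ (a): on the logarithmic scale the law `ν_q` coming from `U_q` is tail-equivalent to the law
`ν_p ∈ S(α)` coming from `U_p`, and `ν̄_q(x - s) - e^{αs} ν̄_q(x) = o(ν̄_p(x))`. Split
`{u + v > x}` according to whether `u ≤ h`, `v ≤ h`, or both exceed `h`. Dominated convergence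
handles the first two parts, and for large `h` the third is small because `ν_p ∈ S(α)`. Hence
`ν̄_q^{2*}(x) = 2 ν̂_q(α) ν̄_q(x) + o(ν̄_p(x))`, that is, `ν_q ∈ S(α)`.
-/

open MeasureTheory ProbabilityTheory Filter Asymptotics

noncomputable section

/-- The tail function `Ū(x) = U((x,∞))` of a measure on `ℝ`. -/
def tailDist (μ : Measure ℝ) (x : ℝ) : ℝ := (μ (Set.Ioi x)).toReal

/-- Convolution of two measures on `ℝ`. -/
def convDist (μ ν : Measure ℝ) : Measure ℝ := (μ.prod ν).map (fun p => p.1 + p.2)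

/-- The distribution with CDF `V(x)𝟙_{x ≥ 0}`, i.e. the pushforward under `x ↦ max x 0`. -/
def posMod (μ : Measure ℝ) : Measure ℝ := μ.map (fun x => max x 0)

/-- `V̂(α) = ∫ e^{αx} V(dx)`. -/
def mgfVal (μ : Measure ℝ) (α : ℝ) : ℝ := ∫ x, Real.exp (α * x) ∂μ

/-- The convolution-equivalence class `S(α)`: a distribution `V` on `ℝ` is in `S(α)` if
the distribution with CDF `V(x)𝟙_{x ≥ 0}` has everywhere positive tail,
`V̄(x-y)/V̄(x) → e^{αy}` for all `y`, `V̂(α) = ∫ e^{αx} V(dx) < ∞`, and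
`\overline{V^{2*}}(x)/V̄(x) → 2V̂(α)`. -/
def MemCE (α : ℝ) (V : Measure ℝ) : Prop :=
  (∀ x : ℝ, 0 < tailDist (posMod V) x) ∧
  (∀ y : ℝ, Tendsto (fun x => tailDist (posMod V) (x - y) / tailDist (posMod V) x)
      atTop (nhds (Real.exp (α * y)))) ∧
  Integrable (fun x => Real.exp (α * x)) (posMod V) ∧
  Tendsto (fun x => tailDist (convDist (posMod V) (posMod V)) x / tailDist (posMod V) x)
      atTop (nhds (2 * mgfVal (posMod V) α))

/-- Strongly regular variation `R*_{-α}`: the distribution `V` with tail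
`V̄(x) = Ū(eˣ)/Ū(0)` (i.e. the conditional law of `ln ξ` given `ξ > 0`, where `ξ ∼ U`)
belongs to `S(α)`. -/
def MemSRV (α : ℝ) (U : Measure ℝ) : Prop :=
  U (Set.Ioi 0) ≠ 0 ∧
  MemCE α (((U (Set.Ioi 0))⁻¹ • U.restrict (Set.Ioi 0)).map Real.log)

/-- Regular variation `R_{-α}`: `Ū(x) > 0` for all `x` and `Ū(xy)/Ū(x) → y^{-α}` for `y > 0`. -/
def MemRV (α : ℝ) (U : Measure ℝ) : Prop :=
  (∀ x : ℝ, 0 < tailDist U x) ∧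
  ∀ y : ℝ, 0 < y →
    Tendsto (fun x => tailDist U (x * y) / tailDist U x) atTop (nhds (y ^ (-α)))

/-- Assumption A: every convex combination `pF + (1-p)G`, `0 < p < 1`,
is of strongly regular variation with index `-α`. -/
def AssumpA (α : ℝ) (F G : Measure ℝ) : Prop :=
  ∀ p : ℝ, 0 < p → p < 1 →
    MemSRV α (ENNReal.ofReal p • F + ENNReal.ofReal (1 - p) • G)

end

open Set
open scoped ENNReal Topology

section LittleO

variable {β : Type*} {l : Filter β}

lemma isLittleO_sub_mul_iff_tendsto_div {f g : β → ℝ} {c : ℝ} (hg : ∀ᶠ x in l, g x ≠ 0) :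
    (fun x => f x - c * g x) =o[l] g ↔ Tendsto (fun x => f x / g x) l (𝓝 c) := by
  rw [isLittleO_iff_tendsto' (hg.mono fun x hx h0 => absurd h0 hx)]
  conv_rhs => rw [← tendsto_sub_const_iff c, sub_self]
  refine tendsto_congr' (hg.mono fun x hx => ?_)
  dsimp only
  rw [sub_div, mul_div_cancel_right₀ _ hx]

lemma isLittleO_of_forall_le_add {f g : β → ℝ}
    (h : ∀ ε > 0, ∃ r : β → ℝ, r =o[l] g ∧ ∀ᶠ x in l, ‖f x‖ ≤ ε * ‖g x‖ + ‖r x‖) :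
    f =o[l] g := by
  refine isLittleO_iff.mpr fun ε hε => ?_
  obtain ⟨r, hr, hfr⟩ := h (ε / 2) (half_pos hε)
  filter_upwards [hfr, hr.def (half_pos hε)] with x hfx hrx
  linarith

end LittleO

section Tails

instance isFiniteMeasure_convDist (σ τ : Measure ℝ) [IsFiniteMeasure σ] [IsFiniteMeasure τ] :
    IsFiniteMeasure (convDist σ τ) := by
  unfold convDist; infer_instance

instance isFiniteMeasure_posMod (μ : Measure ℝ) [IsFiniteMeasure μ] :
    IsFiniteMeasure (posMod μ) := by
  unfold posMod; infer_instance

lemma tailDist_nonneg (μ : Measure ℝ) (x : ℝ) : 0 ≤ tailDist μ x := ENNReal.toReal_nonneg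

lemma tailDist_antitone (μ : Measure ℝ) [IsFiniteMeasure μ] : Antitone (tailDist μ) :=
  fun _ _ hab => ENNReal.toReal_mono (measure_ne_top _ _) (measure_mono (Ioi_subset_Ioi hab))

lemma tailDist_pos_iff (μ : Measure ℝ) [IsFiniteMeasure μ] (x : ℝ) :
    0 < tailDist μ x ↔ μ (Ioi x) ≠ 0 := by
  simp [tailDist, ENNReal.toReal_pos_iff, pos_iff_ne_zero, measure_lt_top]

lemma measure_Ioi_le_ofReal_mul_of_tailDist_le {σ ρ : Measure ℝ} [IsFiniteMeasure σ]
    [IsFiniteMeasure ρ] {C : ℝ} (hdom : ∀ x, tailDist σ x ≤ C * tailDist ρ x) (z : ℝ) :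
    σ (Ioi z) ≤ ENNReal.ofReal C * ρ (Ioi z) := by
  rw [← ENNReal.ofReal_toReal (measure_ne_top σ _), ← ENNReal.ofReal_toReal (measure_ne_top ρ _),
    ← ENNReal.ofReal_mul' ENNReal.toReal_nonneg]
  exact ENNReal.ofReal_le_ofReal (hdom z)

lemma measurable_measure_Ioi (μ : Measure ℝ) : Measurable fun z => μ (Ioi z) :=
  Antitone.measurable fun _ _ hst => measure_mono (Ioi_subset_Ioi hst)

lemma tailDist_pos_of_le_mul {σ ρ : Measure ℝ} {C x : ℝ} (hρ : 0 < tailDist ρ x)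
    (hle : tailDist ρ x ≤ C * tailDist σ x) : 0 < tailDist σ x :=
  (tailDist_nonneg σ x).lt_of_ne fun h0 => by simpa [← h0] using hρ.trans_le hle

lemma integrable_tailDist_comp_sub (μ ν : Measure ℝ) [IsFiniteMeasure μ] [IsFiniteMeasure ν]
    (x : ℝ) : Integrable (fun u => tailDist ν (x - u)) μ :=
  .of_bound ((tailDist_antitone ν).measurable.comp (by fun_prop)).aestronglyMeasurable
    (ν univ).toReal <| .of_forall fun u => by
      rw [Real.norm_of_nonneg (tailDist_nonneg _ _)]
      exact ENNReal.toReal_mono (measure_ne_top _ _) (measure_mono (subset_univ _))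

lemma restrict_Ioi_apply_Ioi_le {μ' μ : Measure ℝ} [IsFiniteMeasure μ'] [IsFiniteMeasure μ]
    {C : ℝ} (hdom : ∀ x, tailDist μ' x ≤ C * tailDist μ x) (h z : ℝ) :
    μ'.restrict (Ioi h) (Ioi z) ≤ ENNReal.ofReal C * μ.restrict (Ioi h) (Ioi z) := by
  simp only [Measure.restrict_apply measurableSet_Ioi, Ioi_inter_Ioi]
  exact measure_Ioi_le_ofReal_mul_of_tailDist_le hdom _

end Tails

section Convolution

lemma convDist_apply_Ioi (σ τ : Measure ℝ) [SFinite τ] (x : ℝ) :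
    convDist σ τ (Ioi x) = ∫⁻ u, τ (Ioi (x - u)) ∂σ := by
  rw [convDist, Measure.map_apply (by fun_prop) measurableSet_Ioi,
    Measure.prod_apply (measurableSet_Ioi.preimage (by fun_prop))]
  congr! with u
  ext v
  simp [sub_lt_iff_lt_add']

lemma convDist_apply_Ioi_le_of_le (σ : Measure ℝ) {τ τ' : Measure ℝ} [SFinite τ] [SFinite τ']
    {c : ℝ≥0∞} (hc : c ≠ ⊤) (hdom : ∀ z, τ' (Ioi z) ≤ c * τ (Ioi z)) (x : ℝ) :
    convDist σ τ' (Ioi x) ≤ c * convDist σ τ (Ioi x) := by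
  rw [convDist_apply_Ioi, convDist_apply_Ioi, ← lintegral_const_mul' _ _ hc]
  exact lintegral_mono fun u => hdom _

variable (σ τ : Measure ℝ) [SFinite σ] [SFinite τ]

lemma convDist_comm : convDist σ τ = convDist τ σ := by
  rw [convDist, convDist, ← Measure.prod_swap, Measure.map_map (by fun_prop) measurable_swap]
  simp only [Function.comp_def, Prod.fst_swap, Prod.snd_swap, add_comm]

lemma convDist_add_left (σ' : Measure ℝ) [SFinite σ'] :
    convDist (σ + σ') τ = convDist σ τ + convDist σ' τ := by
  rw [convDist, Measure.add_prod, Measure.map_add _ _ (by fun_prop), convDist, convDist]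

lemma convDist_add_right (τ' : Measure ℝ) [SFinite τ'] :
    convDist σ (τ + τ') = convDist σ τ + convDist σ τ' := by
  rw [convDist_comm, convDist_add_left, convDist_comm τ, convDist_comm τ']

lemma convDist_Ioi_eq_add (h x : ℝ) (hx : 2 * h < x) :
    convDist σ τ (Ioi x) = ∫⁻ u in Iic h, τ (Ioi (x - u)) ∂σ + ∫⁻ v in Iic h, σ (Ioi (x - v)) ∂τ
      + convDist (σ.restrict (Ioi h)) (τ.restrict (Ioi h)) (Ioi x) := by
  have hσ := σ.restrict_add_restrict_compl (measurableSet_Iic (a := h))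
  have hτ := τ.restrict_add_restrict_compl (measurableSet_Iic (a := h))
  rw [compl_Iic] at hσ hτ
  have hmid : convDist (σ.restrict (Ioi h)) (τ.restrict (Iic h)) (Ioi x)
      = ∫⁻ v in Iic h, σ (Ioi (x - v)) ∂τ := by
    rw [convDist_comm, convDist_apply_Ioi]
    refine setLIntegral_congr_fun measurableSet_Iic fun v hv => ?_
    rw [Measure.restrict_apply measurableSet_Ioi,
      inter_eq_left.mpr (Ioi_subset_Ioi (by linarith [mem_Iic.mp hv]))]
  have hsplit : convDist σ τ = convDist (σ.restrict (Iic h)) τ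
      + (convDist (σ.restrict (Ioi h)) (τ.restrict (Iic h))
        + convDist (σ.restrict (Ioi h)) (τ.restrict (Ioi h))) := by
    rw [← convDist_add_right, hτ, ← convDist_add_left, hσ]
  rw [hsplit, Measure.coe_add, Measure.coe_add, Pi.add_apply, Pi.add_apply, convDist_apply_Ioi,
    hmid, add_assoc]

lemma tailDist_convDist_restrict_Ioi_le {σ' τ' : Measure ℝ} [IsFiniteMeasure σ']
    [IsFiniteMeasure τ'] [IsFiniteMeasure σ] [IsFiniteMeasure τ] {C : ℝ} (hC : 0 ≤ C)
    (hσ : ∀ x, tailDist σ' x ≤ C * tailDist σ x) (hτ : ∀ x, tailDist τ' x ≤ C * tailDist τ x)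
    (h x : ℝ) :
    tailDist (convDist (σ'.restrict (Ioi h)) (τ'.restrict (Ioi h))) x
      ≤ C * C * tailDist (convDist (σ.restrict (Ioi h)) (τ.restrict (Ioi h))) x := by
  have key : convDist (σ'.restrict (Ioi h)) (τ'.restrict (Ioi h)) (Ioi x)
      ≤ ENNReal.ofReal C * (ENNReal.ofReal C
          * convDist (σ.restrict (Ioi h)) (τ.restrict (Ioi h)) (Ioi x)) := by
    refine (convDist_apply_Ioi_le_of_le _ ENNReal.ofReal_ne_top
      (restrict_Ioi_apply_Ioi_le hτ h) x).trans ?_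
    gcongr
    rw [convDist_comm, convDist_comm (σ.restrict _)]
    exact convDist_apply_Ioi_le_of_le _ ENNReal.ofReal_ne_top (restrict_Ioi_apply_Ioi_le hσ h) x
  have := ENNReal.toReal_mono (ENNReal.mul_ne_top ENNReal.ofReal_ne_top
    (ENNReal.mul_ne_top ENNReal.ofReal_ne_top (measure_ne_top _ _))) key
  rwa [ENNReal.toReal_mul, ENNReal.toReal_mul, ENNReal.toReal_ofReal hC, ← mul_assoc] at this

end Convolution

/-- The class `L(α)`. -/
def MemL (α : ℝ) (ρ : Measure ℝ) : Prop :=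
  (∀ x, 0 < tailDist ρ x) ∧
    ∀ y, Tendsto (fun x => tailDist ρ (x - y) / tailDist ρ x) atTop (𝓝 (Real.exp (α * y)))

def TailShiftLittleO (α : ℝ) (σ ρ : Measure ℝ) : Prop :=
  ∀ y, (fun x => tailDist σ (x - y) - Real.exp (α * y) * tailDist σ x) =o[atTop] tailDist ρ

lemma MemL.tailShiftLittleO {α : ℝ} {ρ : Measure ℝ} (hρ : MemL α ρ) : TailShiftLittleO α ρ ρ :=
  fun y => (isLittleO_sub_mul_iff_tendsto_div (.of_forall fun x => (hρ.1 x).ne')).mpr (hρ.2 y)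

lemma nonneg_of_tailDist_le_mul {σ ρ : Measure ℝ} {C : ℝ} (hρ : ∀ x, 0 < tailDist ρ x)
    (hdom : ∀ x, tailDist σ x ≤ C * tailDist ρ x) : 0 ≤ C :=
  nonneg_of_mul_nonneg_left ((tailDist_nonneg σ 0).trans (hdom 0)) (hρ 0)

section Truncation

variable (σ τ : Measure ℝ) [IsFiniteMeasure σ] [IsFiniteMeasure τ]

lemma tailDist_convDist_eq_add (h x : ℝ) (hx : 2 * h < x) :
    tailDist (convDist σ τ) x = ∫ u in Iic h, tailDist τ (x - u) ∂σ
      + ∫ v in Iic h, tailDist σ (x - v) ∂τ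
      + tailDist (convDist (σ.restrict (Ioi h)) (τ.restrict (Ioi h))) x := by
  have hfin := measure_ne_top (convDist σ τ) (Ioi x)
  rw [convDist_Ioi_eq_add σ τ h x hx] at hfin
  rw [tailDist, convDist_Ioi_eq_add σ τ h x hx]
  obtain ⟨⟨h₁, h₂⟩, h₃⟩ := ENNReal.add_ne_top.mp hfin |>.imp_left ENNReal.add_ne_top.mp
  have toReal_lintegral : ∀ (μ ν : Measure ℝ) [IsFiniteMeasure ν],
      ∫ u in Iic h, tailDist ν (x - u) ∂μ = (∫⁻ u in Iic h, ν (Ioi (x - u)) ∂μ).toReal :=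
    fun μ ν _ => integral_toReal ((measurable_measure_Ioi ν).comp (by fun_prop)).aemeasurable
      (.of_forall fun _ => measure_lt_top _ _)
  rw [ENNReal.toReal_add (ENNReal.add_ne_top.mpr ⟨h₁, h₂⟩) h₃,
    ENNReal.toReal_add h₁ h₂, toReal_lintegral, toReal_lintegral, tailDist]

lemma tailDist_convDist_sub_eq (α h x : ℝ) (hx : 2 * h < x) :
    tailDist (convDist σ τ) x - mgfVal σ α * tailDist τ x - mgfVal τ α * tailDist σ x
      = ((∫ u in Iic h, tailDist τ (x - u) ∂σ)
            - (∫ u in Iic h, Real.exp (α * u) ∂σ) * tailDist τ x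
          + ((∫ u in Iic h, tailDist σ (x - u) ∂τ)
            - (∫ u in Iic h, Real.exp (α * u) ∂τ) * tailDist σ x))
        + (tailDist (convDist (σ.restrict (Ioi h)) (τ.restrict (Ioi h))) x
          - (mgfVal σ α - ∫ u in Iic h, Real.exp (α * u) ∂σ) * tailDist τ x
          - (mgfVal τ α - ∫ u in Iic h, Real.exp (α * u) ∂τ) * tailDist σ x) := by
  rw [tailDist_convDist_eq_add σ τ h x hx]
  ring

variable {σ τ} {α : ℝ} {ρ : Measure ℝ} {C : ℝ}

lemma abs_tailDist_sub_exp_mul_le (hα : 0 ≤ α) (hdom : ∀ x, tailDist τ x ≤ C * tailDist ρ x)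
    (hC : 0 ≤ C) {h u x : ℝ} (hu : u ≤ h)
    (hx : tailDist ρ (x - h) ≤ 2 * Real.exp (α * h) * tailDist ρ x) :
    |tailDist τ (x - u) - Real.exp (α * u) * tailDist τ x|
      ≤ 3 * C * Real.exp (α * h) * tailDist ρ x := by
  have hexp : Real.exp (α * u) ≤ Real.exp (α * h) := by gcongr
  have hshift : tailDist τ (x - u) ≤ C * (2 * Real.exp (α * h) * tailDist ρ x) :=
    (tailDist_antitone τ (show x - h ≤ x - u by linarith)).trans ((hdom _).trans (by gcongr))
  have hscale : Real.exp (α * u) * tailDist τ x ≤ Real.exp (α * h) * (C * tailDist ρ x) :=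
    mul_le_mul hexp (hdom x) (tailDist_nonneg τ x) (Real.exp_pos _).le
  have h₁ := tailDist_nonneg τ (x - u)
  have h₂ := mul_nonneg (Real.exp_pos (α * u)).le (tailDist_nonneg τ x)
  rw [abs_le]
  constructor <;> nlinarith

lemma isLittleO_setIntegral_Iic_tailDist_sub (hα : 0 ≤ α) (hρ : MemL α ρ)
    (hdom : ∀ x, tailDist τ x ≤ C * tailDist ρ x) (hshift : TailShiftLittleO α τ ρ) (h : ℝ) :
    (fun x => ∫ u in Iic h, tailDist τ (x - u) ∂σ
        - (∫ u in Iic h, Real.exp (α * u) ∂σ) * tailDist τ x) =o[atTop] tailDist ρ := by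
  have hC := nonneg_of_tailDist_le_mul hρ.1 hdom
  have htail := integrable_tailDist_comp_sub (σ.restrict (Iic h)) τ
  have hexp : Integrable (fun u => Real.exp (α * u)) (σ.restrict (Iic h)) :=
    Integrable.of_bound (by fun_prop) (Real.exp (α * h)) <| by
      filter_upwards [ae_restrict_mem measurableSet_Iic] with u hu
      rw [Real.norm_of_nonneg (Real.exp_pos _).le]
      exact Real.exp_le_exp.mpr (mul_le_mul_of_nonneg_left hu hα)
  have hratio : ∀ x, (∫ u in Iic h, tailDist τ (x - u) ∂σ
        - (∫ u in Iic h, Real.exp (α * u) ∂σ) * tailDist τ x) / tailDist ρ x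
      = ∫ u in Iic h, (tailDist τ (x - u) - Real.exp (α * u) * tailDist τ x) / tailDist ρ x ∂σ :=
    fun x => by rw [integral_div, integral_sub (htail x) (hexp.mul_const _), integral_mul_const]
  rw [isLittleO_iff_tendsto' (.of_forall fun x h0 => absurd h0 (hρ.1 x).ne'), funext hratio,
    ← integral_zero ℝ ℝ]
  refine tendsto_integral_filter_of_dominated_convergence (fun _ => 3 * C * Real.exp (α * h))
    (.of_forall fun x =>
      (((htail x).sub (hexp.mul_const _)).div_const _).aestronglyMeasurable)
    ?_ (integrable_const _) (.of_forall fun u => (hshift u).tendsto_div_nhds_zero)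
  filter_upwards [(hρ.2 h).eventually_le_const (lt_two_mul_self (Real.exp_pos (α * h)))]
    with x hx
  filter_upwards [ae_restrict_mem measurableSet_Iic] with u hu
  rw [div_le_iff₀ (hρ.1 x)] at hx
  rw [norm_div, Real.norm_of_nonneg (hρ.1 x).le, div_le_iff₀ (hρ.1 x), Real.norm_eq_abs]
  exact abs_tailDist_sub_exp_mul_le hα hdom hC hu (by linarith)

end Truncation

section ConvolutionEquivalence

variable {α : ℝ}

lemma integrable_exp_mul_of_tailDist_le (hα : 0 ≤ α) {ρ σ : Measure ℝ} [IsFiniteMeasure ρ]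
    [IsFiniteMeasure σ] {C : ℝ} (hdom : ∀ x, tailDist σ x ≤ C * tailDist ρ x)
    (hint : Integrable (fun x => Real.exp (α * x)) ρ) :
    Integrable (fun x => Real.exp (α * x)) σ := by
  rcases hα.eq_or_lt with rfl | hα
  · simp
  have layerCake : ∀ μ : Measure ℝ, ∫⁻ x, ENNReal.ofReal (Real.exp (α * x)) ∂μ
      = ∫⁻ t in Ioi 0, μ (Ioi (Real.log t / α)) := by
    intro μ
    rw [lintegral_eq_lintegral_meas_lt μ (.of_forall fun x => (Real.exp_pos _).le) (by fun_prop)]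
    refine setLIntegral_congr_fun measurableSet_Ioi fun t ht => ?_
    congr 1
    ext a
    change t < Real.exp (α * a) ↔ Real.log t / α < a
    rw [div_lt_iff₀ hα, mul_comm, Real.log_lt_iff_lt_exp ht]
  refine ⟨by fun_prop, ?_⟩
  rw [hasFiniteIntegral_iff_ofReal (.of_forall fun x => (Real.exp_pos _).le), layerCake]
  calc ∫⁻ t in Ioi 0, σ (Ioi (Real.log t / α))
      ≤ ∫⁻ t in Ioi 0, ENNReal.ofReal C * ρ (Ioi (Real.log t / α)) :=
        lintegral_mono fun t => measure_Ioi_le_ofReal_mul_of_tailDist_le hdom _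
    _ = ENNReal.ofReal C * ∫⁻ x, ENNReal.ofReal (Real.exp (α * x)) ∂ρ := by
        rw [lintegral_const_mul' _ _ ENNReal.ofReal_ne_top, layerCake]
    _ < ⊤ := ENNReal.mul_lt_top ENNReal.ofReal_lt_top
        ((hasFiniteIntegral_iff_ofReal (.of_forall fun x => (Real.exp_pos _).le)).mp hint.2)

lemma tendsto_setIntegral_Iic {μ : Measure ℝ} {f : ℝ → ℝ} (hf : Integrable f μ) :
    Tendsto (fun h => ∫ u in Iic h, f u ∂μ) atTop (𝓝 (∫ u, f u ∂μ)) :=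
  (aecover_Iic tendsto_id).integral_tendsto_of_countably_generated hf

lemma MemCE.memL {V : Measure ℝ} (hV : MemCE α V) : MemL α (posMod V) := ⟨hV.1, hV.2.1⟩

variable {V : Measure ℝ} [IsFiniteMeasure V]

/-- This part of `V̄^{2*}(x) / V̄(x)` tends to `2 V̂(α) - 2 ∫_{u ≤ h} e^{αu} V(du)`. -/
lemma MemCE.eventually_tailDist_convDist_restrict_le (hα : 0 ≤ α) (hV : MemCE α V) {ε : ℝ}
    (hε : 0 < ε) :
    ∀ᶠ h in atTop, ∀ᶠ x in atTop,
      tailDist (convDist ((posMod V).restrict (Ioi h)) ((posMod V).restrict (Ioi h))) x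
        ≤ ε * tailDist (posMod V) x := by
  set ρ := posMod V
  have hρ0 : ∀ᶠ x in atTop, tailDist ρ x ≠ 0 := .of_forall fun x => (hV.1 x).ne'
  filter_upwards [(tendsto_setIntegral_Iic hV.2.2.1).eventually
    (eventually_gt_nhds (sub_lt_self (mgfVal ρ α) (half_pos hε)))] with h hh
  have hlow : Tendsto (fun x => (∫ u in Iic h, tailDist ρ (x - u) ∂ρ) / tailDist ρ x) atTop
      (𝓝 (∫ u in Iic h, Real.exp (α * u) ∂ρ)) :=
    (isLittleO_sub_mul_iff_tendsto_div hρ0).mp <|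
      isLittleO_setIntegral_Iic_tailDist_sub hα hV.memL (fun x => (one_mul _).ge)
        hV.memL.tailShiftLittleO h
  have hK := (hV.2.2.2.sub (hlow.const_mul 2)).eventually_le_const
    (show 2 * mgfVal ρ α - 2 * ∫ u in Iic h, Real.exp (α * u) ∂ρ < ε by rw [mgfVal] at *; linarith)
  filter_upwards [hK, eventually_gt_atTop (2 * h)] with x hKx hx
  have hsplit : tailDist (convDist ρ ρ) x / tailDist ρ x
      - 2 * ((∫ u in Iic h, tailDist ρ (x - u) ∂ρ) / tailDist ρ x)
      = tailDist (convDist (ρ.restrict (Ioi h)) (ρ.restrict (Ioi h))) x / tailDist ρ x := by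
    rw [tailDist_convDist_eq_add ρ ρ h x hx]
    ring
  rwa [hsplit, div_le_iff₀ (hV.1 x)] at hKx

lemma eventually_mgfVal_sub_setIntegral_Iic_le {σ : Measure ℝ}
    (hint : Integrable (fun x => Real.exp (α * x)) σ) {δ : ℝ} (hδ : 0 < δ) :
    ∀ᶠ h in atTop, 0 ≤ mgfVal σ α - ∫ u in Iic h, Real.exp (α * u) ∂σ
      ∧ mgfVal σ α - ∫ u in Iic h, Real.exp (α * u) ∂σ ≤ δ := by
  filter_upwards [(tendsto_setIntegral_Iic hint).eventually (eventually_ge_nhds (sub_lt_self _ hδ))]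
    with h hh
  have := setIntegral_le_integral (s := Iic h) hint (.of_forall fun u => (Real.exp_pos _).le)
  exact ⟨by rw [mgfVal]; linarith, by rw [mgfVal]; linarith⟩

lemma MemCE.isLittleO_tailDist_convDist_sub (hα : 0 ≤ α) (hV : MemCE α V) {σ τ : Measure ℝ}
    [IsFiniteMeasure σ] [IsFiniteMeasure τ] {C : ℝ}
    (hσ : ∀ x, tailDist σ x ≤ C * tailDist (posMod V) x)
    (hτ : ∀ x, tailDist τ x ≤ C * tailDist (posMod V) x)
    (hσs : TailShiftLittleO α σ (posMod V)) (hτs : TailShiftLittleO α τ (posMod V)) :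
    (fun x => tailDist (convDist σ τ) x - mgfVal σ α * tailDist τ x
        - mgfVal τ α * tailDist σ x) =o[atTop] tailDist (posMod V) := by
  set ρ := posMod V
  have hC := nonneg_of_tailDist_le_mul hV.1 hσ
  refine isLittleO_of_forall_le_add fun ε hε => ?_
  set δ := ε / (C + 1) ^ 2
  have hδ : 0 < δ := by positivity
  have hδC : δ * (C * C) + 2 * (δ * C) ≤ ε := by
    have hδ' : δ * (C * C) + 2 * (δ * C) = ε * (C * C + 2 * C) / (C + 1) ^ 2 := by
      simp only [δ]; ring
    rw [hδ', div_le_iff₀ (by positivity)]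
    nlinarith
  obtain ⟨h, hK, ⟨hσ0, hσδ⟩, hτ0, hτδ⟩ :=
    (hV.eventually_tailDist_convDist_restrict_le hα hδ |>.and <|
      (eventually_mgfVal_sub_setIntegral_Iic_le
        (integrable_exp_mul_of_tailDist_le hα hσ hV.2.2.1) hδ).and
      (eventually_mgfVal_sub_setIntegral_Iic_le
        (integrable_exp_mul_of_tailDist_le hα hτ hV.2.2.1) hδ)).exists
  refine ⟨_, (isLittleO_setIntegral_Iic_tailDist_sub (σ := σ) hα hV.memL hτ hτs h).add
    (isLittleO_setIntegral_Iic_tailDist_sub (σ := τ) hα hV.memL hσ hσs h), ?_⟩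
  filter_upwards [hK, eventually_gt_atTop (2 * h)] with x hKx hx
  have hKστ := (tailDist_convDist_restrict_Ioi_le ρ ρ hC hσ hτ h x).trans
    (mul_le_mul_of_nonneg_left hKx (mul_nonneg hC hC))
  have hrest : |tailDist (convDist (σ.restrict (Ioi h)) (τ.restrict (Ioi h))) x
      - (mgfVal σ α - ∫ u in Iic h, Real.exp (α * u) ∂σ) * tailDist τ x
      - (mgfVal τ α - ∫ u in Iic h, Real.exp (α * u) ∂τ) * tailDist σ x| ≤ ε * tailDist ρ x := by
    have := mul_le_mul hσδ (hτ x) (tailDist_nonneg _ _) hδ.le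
    have := mul_le_mul hτδ (hσ x) (tailDist_nonneg _ _) hδ.le
    have := tailDist_nonneg (convDist (σ.restrict (Ioi h)) (τ.restrict (Ioi h))) x
    have := mul_nonneg hσ0 (tailDist_nonneg τ x)
    have := mul_nonneg hτ0 (tailDist_nonneg σ x)
    have := tailDist_nonneg ρ x
    rw [abs_le]; constructor <;> nlinarith
  rw [Real.norm_of_nonneg (tailDist_nonneg ρ x), tailDist_convDist_sub_eq σ τ α h x hx]
  exact (norm_add_le _ _).trans (by rw [Real.norm_eq_abs, Real.norm_eq_abs] at *; linarith)

lemma MemCE.of_tailDist_le (hα : 0 ≤ α) (hV : MemCE α V) {V' : Measure ℝ} [IsFiniteMeasure V']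
    {C₁ C₂ : ℝ}
    (hle : ∀ x, tailDist (posMod V') x ≤ C₁ * tailDist (posMod V) x)
    (hge : ∀ x, tailDist (posMod V) x ≤ C₂ * tailDist (posMod V') x)
    (hshift : TailShiftLittleO α (posMod V') (posMod V)) : MemCE α V' := by
  have hpos : ∀ x, 0 < tailDist (posMod V') x := fun x => tailDist_pos_of_le_mul (hV.1 x) (hge x)
  have hbig : tailDist (posMod V) =O[atTop] tailDist (posMod V') :=
    .of_bound C₂ <| .of_forall fun x => by
      simpa only [Real.norm_of_nonneg (tailDist_nonneg _ _)] using hge x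
  have hne : ∀ᶠ x in atTop, tailDist (posMod V') x ≠ 0 := .of_forall fun x => (hpos x).ne'
  refine ⟨hpos, fun y => (isLittleO_sub_mul_iff_tendsto_div hne).mp
    ((hshift y).trans_isBigO hbig), integrable_exp_mul_of_tailDist_le hα hle hV.2.2.1,
    (isLittleO_sub_mul_iff_tendsto_div hne).mp ?_⟩
  exact ((hV.isLittleO_tailDist_convDist_sub hα hle hle hshift hshift).trans_isBigO hbig).congr_left
    fun x => by ring

end ConvolutionEquivalence

section LogScale

noncomputable def logLaw (W : Measure ℝ) : Measure ℝ :=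
  ((W (Ioi 0))⁻¹ • W.restrict (Ioi 0)).map Real.log

lemma memSRV_iff {α : ℝ} {W : Measure ℝ} : MemSRV α W ↔ W (Ioi 0) ≠ 0 ∧ MemCE α (logLaw W) :=
  Iff.rfl

lemma posMod_apply_Ioi (μ : Measure ℝ) {x : ℝ} (hx : 0 ≤ x) : posMod μ (Ioi x) = μ (Ioi x) := by
  rw [posMod, Measure.map_apply (by fun_prop) measurableSet_Ioi]
  congr 1
  ext y
  simp [hx.not_gt]

lemma tailDist_posMod_of_neg (μ : Measure ℝ) {x : ℝ} (hx : x < 0) :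
    tailDist (posMod μ) x = (μ univ).toReal := by
  rw [tailDist, posMod, Measure.map_apply (by fun_prop) measurableSet_Ioi]
  congr 2
  ext y
  simp [hx]

variable {W : Measure ℝ}

lemma isProbabilityMeasure_logLaw [IsFiniteMeasure W] (hW : W (Ioi 0) ≠ 0) :
    IsProbabilityMeasure (logLaw W) := by
  constructor
  rw [logLaw, Measure.map_apply Real.measurable_log MeasurableSet.univ, preimage_univ,
    Measure.smul_apply, Measure.restrict_apply_univ, smul_eq_mul,
    ENNReal.inv_mul_cancel hW (measure_ne_top _ _)]

lemma logLaw_apply_Ioi (x : ℝ) : logLaw W (Ioi x) = (W (Ioi 0))⁻¹ * W (Ioi (Real.exp x)) := by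
  rw [logLaw, Measure.map_apply Real.measurable_log measurableSet_Ioi, Measure.smul_apply,
    Measure.restrict_apply (measurableSet_Ioi.preimage Real.measurable_log), smul_eq_mul]
  congr 2
  ext t
  simp only [mem_inter_iff, mem_preimage, mem_Ioi]
  exact ⟨fun ⟨h, ht⟩ => (Real.lt_log_iff_exp_lt ht).mp h,
    fun h => have ht := (Real.exp_pos x).trans h; ⟨(Real.lt_log_iff_exp_lt ht).mpr h, ht⟩⟩

lemma tailDist_posMod_logLaw {x : ℝ} (hx : 0 ≤ x) :
    tailDist (posMod (logLaw W)) x = tailDist W (Real.exp x) / tailDist W 0 := by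
  rw [tailDist, posMod_apply_Ioi _ hx, logLaw_apply_Ioi, ENNReal.toReal_mul, ENNReal.toReal_inv,
    inv_mul_eq_div, tailDist, tailDist]

lemma tailDist_posMod_logLaw_le [IsFiniteMeasure W] {W' : Measure ℝ} [IsFiniteMeasure W']
    (hW : W (Ioi 0) ≠ 0) (hW' : W' (Ioi 0) ≠ 0) {C : ℝ}
    (hle : ∀ t, tailDist W' t ≤ C * tailDist W t) (x : ℝ) :
    tailDist (posMod (logLaw W')) x
      ≤ max (C * tailDist W 0 / tailDist W' 0) 1 * tailDist (posMod (logLaw W)) x := by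
  have := isProbabilityMeasure_logLaw hW
  have := isProbabilityMeasure_logLaw hW'
  rcases lt_or_ge x 0 with hx | hx
  · simp [tailDist_posMod_of_neg _ hx]
  have hc := (tailDist_pos_iff W 0).mpr hW
  have hc' := (tailDist_pos_iff W' 0).mpr hW'
  rw [tailDist_posMod_logLaw hx, tailDist_posMod_logLaw hx]
  calc tailDist W' (Real.exp x) / tailDist W' 0
      ≤ C * tailDist W 0 / tailDist W' 0 * (tailDist W (Real.exp x) / tailDist W 0) := by
        rw [div_mul_div_comm, mul_right_comm, mul_div_mul_right _ _ hc.ne']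
        gcongr
        exact hle _
    _ ≤ _ := by gcongr; exacts [div_nonneg (tailDist_nonneg _ _) hc.le, le_max_left _ _]

lemma isLittleO_tailDist_div_exp_iff [IsFiniteMeasure W] {W' : Measure ℝ} [IsFiniteMeasure W']
    (hW : W (Ioi 0) ≠ 0) (hW' : W' (Ioi 0) ≠ 0) (α s : ℝ) :
    (fun t => tailDist W' (t / Real.exp s) - Real.exp (α * s) * tailDist W' t)
        =o[atTop] tailDist W ↔
      (fun x => tailDist (posMod (logLaw W')) (x - s)
          - Real.exp (α * s) * tailDist (posMod (logLaw W')) x)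
        =o[atTop] tailDist (posMod (logLaw W)) := by
  have hc := (tailDist_pos_iff W 0).mpr hW
  have hc' := (tailDist_pos_iff W' 0).mpr hW'
  have hexp : ∀ {f g : ℝ → ℝ}, f =o[atTop] g ↔ (f ∘ Real.exp) =o[atTop] (g ∘ Real.exp) := by
    intro f g
    rw [← isLittleO_map, Real.map_exp_atTop]
  have hf : (fun t => tailDist W' (t / Real.exp s) - Real.exp (α * s) * tailDist W' t) ∘ Real.exp
      =ᶠ[atTop] fun x => tailDist W' 0 * (tailDist (posMod (logLaw W')) (x - s)
        - Real.exp (α * s) * tailDist (posMod (logLaw W')) x) := by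
    filter_upwards [eventually_ge_atTop (max s 0)] with x hx
    rw [Function.comp_apply, tailDist_posMod_logLaw (by linarith [le_max_left s 0]),
      tailDist_posMod_logLaw (le_of_max_le_right hx), Real.exp_sub]
    field_simp
  have hg : tailDist W ∘ Real.exp
      =ᶠ[atTop] fun x => tailDist W 0 * tailDist (posMod (logLaw W)) x := by
    filter_upwards [eventually_ge_atTop 0] with x hx
    rw [Function.comp_apply, tailDist_posMod_logLaw hx]
    field_simp
  rw [hexp, isLittleO_congr hf hg, isLittleO_const_mul_left_iff hc'.ne',
    isLittleO_const_mul_right_iff hc.ne']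

end LogScale

section StronglyRegularVariation

variable {α : ℝ} {W : Measure ℝ} [IsFiniteMeasure W]

lemma MemSRV.isLittleO_tailDist_div_sub (hW : MemSRV α W) {y : ℝ} (hy : 0 < y) :
    (fun t => tailDist W (t / y) - y ^ α * tailDist W t) =o[atTop] tailDist W := by
  obtain ⟨s, rfl⟩ : ∃ s, Real.exp s = y := ⟨Real.log y, Real.exp_log hy⟩
  rw [← Real.exp_mul, mul_comm s α]
  exact (isLittleO_tailDist_div_exp_iff hW.1 hW.1 α s).mpr (hW.2.memL.tailShiftLittleO s)

lemma MemSRV.of_tailDist_le (hα : 0 ≤ α) (hW : MemSRV α W) {W' : Measure ℝ} [IsFiniteMeasure W']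
    {C₁ C₂ : ℝ} (hle : ∀ t, tailDist W' t ≤ C₁ * tailDist W t)
    (hge : ∀ t, tailDist W t ≤ C₂ * tailDist W' t)
    (hrel : ∀ y, 0 < y → (fun t => tailDist W' (t / y) - y ^ α * tailDist W' t)
      =o[atTop] tailDist W) :
    MemSRV α W' := by
  have hW' : W' (Ioi 0) ≠ 0 :=
    (tailDist_pos_iff W' 0).mp (tailDist_pos_of_le_mul ((tailDist_pos_iff W 0).mpr hW.1) (hge 0))
  have := isProbabilityMeasure_logLaw hW.1
  have := isProbabilityMeasure_logLaw hW'
  refine memSRV_iff.mpr ⟨hW', (memSRV_iff.mp hW).2.of_tailDist_le hα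
    (tailDist_posMod_logLaw_le hW.1 hW' hle) (tailDist_posMod_logLaw_le hW' hW.1 hge) fun s => ?_⟩
  rw [← isLittleO_tailDist_div_exp_iff hW.1 hW']
  simpa only [← Real.exp_mul, mul_comm s α] using hrel _ (Real.exp_pos s)

end StronglyRegularVariation

section Simplex

variable {ι : Type*} [Fintype ι]

lemma uniform_mem_openSimplex (hι : 1 < Fintype.card ι) :
    (∀ _ : ι, 0 < (Fintype.card ι : ℝ)⁻¹ ∧ (Fintype.card ι : ℝ)⁻¹ < 1)
      ∧ ∑ _ : ι, (Fintype.card ι : ℝ)⁻¹ = 1 := by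
  have hι' : (1 : ℝ) < Fintype.card ι := by exact_mod_cast hι
  refine ⟨fun _ => ⟨by positivity, inv_lt_one_of_one_lt₀ hι'⟩, ?_⟩
  rw [Finset.sum_const, Finset.card_univ, nsmul_eq_mul, mul_inv_cancel₀ (by positivity)]

lemma midpoint_single_mem_openSimplex [DecidableEq ι] {p : ι → ℝ} (hp : ∀ j, 0 < p j ∧ p j < 1)
    (hps : ∑ j, p j = 1) (i : ι) :
    (∀ j, 0 < (p j + (Pi.single i 1 : ι → ℝ) j) / 2 ∧ (p j + (Pi.single i 1 : ι → ℝ) j) / 2 < 1)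
      ∧ ∑ j, (p j + (Pi.single i 1 : ι → ℝ) j) / 2 = 1 := by
  refine ⟨fun j => ?_, ?_⟩
  · rcases eq_or_ne j i with rfl | hj
    · simp only [Pi.single_eq_same]; constructor <;> linarith [hp j]
    · simp only [Pi.single_eq_of_ne hj]; constructor <;> linarith [hp j]
  · rw [← Finset.sum_div, Finset.sum_add_distrib, hps, Finset.sum_pi_single']
    norm_num

end Simplex

section Mixture

variable {ι : Type*} [Fintype ι] (U : ι → Measure ℝ) [∀ i, IsFiniteMeasure (U i)]

noncomputable def mixture (p : ι → ℝ) : Measure ℝ := ∑ i, ENNReal.ofReal (p i) • U i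

instance isFiniteMeasure_mixture (p : ι → ℝ) : IsFiniteMeasure (mixture U p) :=
  ⟨by simp [mixture, ENNReal.mul_lt_top, measure_lt_top]⟩

variable {U}

lemma tailDist_mixture {p : ι → ℝ} (hp : ∀ i, 0 ≤ p i) (x : ℝ) :
    tailDist (mixture U p) x = ∑ i, p i * tailDist (U i) x := by
  simp only [tailDist, mixture, Measure.coe_finsetSum, Finset.sum_apply, Measure.smul_apply,
    smul_eq_mul]
  rw [ENNReal.toReal_sum fun i _ => ENNReal.mul_ne_top ENNReal.ofReal_ne_top (measure_ne_top _ _)]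
  simp [ENNReal.toReal_ofReal (hp _)]

lemma tailDist_mixture_le_sum {p : ι → ℝ} (hp : ∀ i, 0 ≤ p i ∧ p i ≤ 1) (x : ℝ) :
    tailDist (mixture U p) x ≤ ∑ i, tailDist (U i) x := by
  rw [tailDist_mixture (fun i => (hp i).1)]
  exact Finset.sum_le_sum fun i _ =>
    mul_le_of_le_one_left (tailDist_nonneg _ _) (hp i).2

lemma sum_tailDist_le_mixture {p : ι → ℝ} (hp : ∀ i, 0 < p i) (x : ℝ) :
    ∑ i, tailDist (U i) x ≤ (∑ i, (p i)⁻¹) * tailDist (mixture U p) x := by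
  rw [Finset.sum_mul]
  refine Finset.sum_le_sum fun i _ => ?_
  rw [le_inv_mul_iff₀ (hp i), tailDist_mixture fun j => (hp j).le]
  exact Finset.single_le_sum (f := fun j => p j * tailDist (U j) x)
    (fun j _ => mul_nonneg (hp j).le (tailDist_nonneg _ _)) (Finset.mem_univ i)

lemma isLittleO_mixture_tailDist_div_sub {p : ι → ℝ} (hp : ∀ i, 0 ≤ p i) {α y : ℝ}
    {l : Filter ℝ} {g : ℝ → ℝ}
    (h : ∀ i, (fun t => tailDist (U i) (t / y) - y ^ α * tailDist (U i) t) =o[l] g) :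
    (fun t => tailDist (mixture U p) (t / y) - y ^ α * tailDist (mixture U p) t) =o[l] g := by
  have := IsLittleO.sum (s := Finset.univ) fun i _ => (h i).const_mul_left (p i)
  refine this.congr_left fun t => ?_
  simp only [Finset.sum_apply, tailDist_mixture hp, Finset.mul_sum, ← Finset.sum_sub_distrib]
  exact Finset.sum_congr rfl fun i _ => by ring

lemma tailDist_eq_two_mul_mixture_sub [DecidableEq ι] {p : ι → ℝ} (hp : ∀ i, 0 ≤ p i) (i : ι)
    (x : ℝ) :
    tailDist (U i) x = 2 * tailDist (mixture U fun j => (p j + (Pi.single i 1 : ι → ℝ) j) / 2) x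
      - tailDist (mixture U p) x := by
  have hq : ∀ j, 0 ≤ (p j + (Pi.single i 1 : ι → ℝ) j) / 2 := fun j => by
    have : 0 ≤ (Pi.single i 1 : ι → ℝ) j := by rcases eq_or_ne j i with rfl | h <;> simp [*]
    linarith [hp j]
  rw [tailDist_mixture hq, tailDist_mixture hp, Finset.mul_sum, ← Finset.sum_sub_distrib]
  simp_rw [← mul_assoc, mul_div_cancel₀ _ (two_ne_zero' ℝ), add_mul, add_sub_cancel_left]
  simp [Pi.single_apply]

lemma tailDist_mixture_isBigO_sum {p : ι → ℝ} (hp : ∀ i, 0 ≤ p i ∧ p i ≤ 1) :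
    tailDist (mixture U p) =O[atTop] fun x => ∑ i, tailDist (U i) x :=
  isBigO_of_le _ fun x => by
    rw [Real.norm_of_nonneg (tailDist_nonneg _ _),
      Real.norm_of_nonneg (Finset.sum_nonneg fun i _ => tailDist_nonneg _ _)]
    exact tailDist_mixture_le_sum hp x

lemma sum_tailDist_isBigO_mixture {p : ι → ℝ} (hp : ∀ i, 0 < p i) :
    (fun x => ∑ i, tailDist (U i) x) =O[atTop] tailDist (mixture U p) :=
  .of_bound _ <| .of_forall fun x => by
    rw [Real.norm_of_nonneg (tailDist_nonneg _ _),
      Real.norm_of_nonneg (Finset.sum_nonneg fun i _ => tailDist_nonneg _ _)]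
    exact sum_tailDist_le_mixture hp x

variable {α : ℝ}

lemma isLittleO_tailDist_div_sub_of_memSRV_mixture [DecidableEq ι] {p : ι → ℝ}
    (hp : ∀ j, 0 < p j ∧ p j < 1) (hps : ∑ j, p j = 1) (i : ι)
    (H : ∀ q : ι → ℝ, (∀ j, 0 < q j ∧ q j < 1) → ∑ j, q j = 1 → MemSRV α (mixture U q))
    {y : ℝ} (hy : 0 < y) :
    (fun x => tailDist (U i) (x / y) - y ^ α * tailDist (U i) x)
      =o[atTop] fun x => ∑ j, tailDist (U j) x := by
  have hrel : ∀ q : ι → ℝ, (∀ j, 0 < q j ∧ q j < 1) → ∑ j, q j = 1 →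
      (fun x => tailDist (mixture U q) (x / y) - y ^ α * tailDist (mixture U q) x)
        =o[atTop] fun x => ∑ j, tailDist (U j) x := fun q hq hqs =>
    ((H q hq hqs).isLittleO_tailDist_div_sub hy).trans_isBigO
      (tailDist_mixture_isBigO_sum fun j => ⟨(hq j).1.le, (hq j).2.le⟩)
  obtain ⟨hq, hqs⟩ := midpoint_single_mem_openSimplex hp hps i
  refine (((hrel _ hq hqs).const_mul_left 2).sub (hrel p hp hps)).congr_left fun x => ?_
  rw [tailDist_eq_two_mul_mixture_sub (fun j => (hp j).1.le) i x,
    tailDist_eq_two_mul_mixture_sub (fun j => (hp j).1.le) i (x / y)]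
  ring

lemma MemSRV.mixture_of_isLittleO (hα : 0 ≤ α) {p q : ι → ℝ} (hp : ∀ j, 0 < p j ∧ p j < 1)
    (hq : ∀ j, 0 < q j ∧ q j < 1) (hP : MemSRV α (mixture U p))
    (hrel : ∀ y, 0 < y → ∀ i, (fun x => tailDist (U i) (x / y) - y ^ α * tailDist (U i) x)
      =o[atTop] fun x => ∑ j, tailDist (U j) x) :
    MemSRV α (mixture U q) :=
  hP.of_tailDist_le hα
    (fun t => (tailDist_mixture_le_sum (fun i => ⟨(hq i).1.le, (hq i).2.le⟩) t).trans
      (sum_tailDist_le_mixture (fun i => (hp i).1) t))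
    (fun t => (tailDist_mixture_le_sum (fun i => ⟨(hp i).1.le, (hp i).2.le⟩) t).trans
      (sum_tailDist_le_mixture (fun i => (hq i).1) t))
    fun y hy => (isLittleO_mixture_tailDist_div_sub (fun i => (hq i).1.le) (hrel y hy)).trans_isBigO
      (sum_tailDist_isBigO_mixture fun i => (hp i).1)

end Mixture

/-- Lemma 3.4: equivalence between membership of every convex combination in `R*_{-α}` and
membership of some convex combination plus the relation
`Ūᵢ(x/y) - y^α Ūᵢ(x) = o(Σⱼ Ūⱼ(x))` for every `y > 0`. -/
theorem stmt_11
    (n : ℕ) (hn : 2 ≤ n)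
    (U : Fin n → Measure ℝ) [∀ i, IsProbabilityMeasure (U i)]
    (α : ℝ) (hα : 0 ≤ α) :
    (∀ p : Fin n → ℝ, (∀ i, 0 < p i ∧ p i < 1) → ∑ i, p i = 1 →
        MemSRV α (∑ i, ENNReal.ofReal (p i) • U i)) ↔
      ((∃ p : Fin n → ℝ, (∀ i, 0 < p i ∧ p i < 1) ∧ ∑ i, p i = 1 ∧
          MemSRV α (∑ i, ENNReal.ofReal (p i) • U i)) ∧
        ∀ y : ℝ, 0 < y → ∀ i : Fin n,
          (fun x => tailDist (U i) (x / y) - y ^ α * tailDist (U i) x)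
            =o[atTop] (fun x => ∑ j, tailDist (U j) x)) := by
  have hcard : 1 < Fintype.card (Fin n) := by rw [Fintype.card_fin]; omega
  constructor
  · intro H
    obtain ⟨hp, hps⟩ := uniform_mem_openSimplex hcard
    exact ⟨⟨_, hp, hps, H _ hp hps⟩, fun y hy i =>
      isLittleO_tailDist_div_sub_of_memSRV_mixture hp hps i H hy⟩
  · rintro ⟨⟨p, hp, -, hP⟩, hrel⟩ q hq -
    exact MemSRV.mixture_of_isLittleO (U := U) hα hp hq hP hrel
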